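/- arXiv:1706.03267 — 3 statements merged into one kernel-verified Lean document; each statement's English description precedes it below -/
import Mathlib

section
/- The reformulated single-Gaussian log-likelihood L̂ is geodesically midpoint-concave on the manifold of symmetric positive definite (d+1)×(d+1) matrices: for all symmetric positive definite S, R ∈ ℝ^{(d+1)×(d+1)}, L̂(S # R) ≥ ½ L̂(S) + ½ L̂(R). -/
/-!
Write `S = T * T` with `T = S^{1/2}` and `N = (T⁻¹ R T⁻¹)^{1/2}`, so that `R = T N² T` and
`S # R = T N T`. Each summand of `L̂` is a constant minus `½ log det` minus `½ yᵀ(·)⁻¹y`.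
The log-determinant is exactly affine along the geodesic, `log det (T N T)` being the average of
`log det (T T)` and `log det (T N² T)`, while with `z = T⁻¹ y` the quadratic terms become
`z ⬝ N⁻¹ z`, `z ⬝ z` and `N⁻¹ z ⬝ N⁻¹ z`, and `2 u ⬝ v ≤ u ⬝ u + v ⬝ v` gives midpoint convexity.
-/

open Matrix Real

noncomputable def pN {d : ℕ} (x μ : Fin d → ℝ) (C : Matrix (Fin d) (Fin d) ℝ) : ℝ :=
  C.det ^ (-(1:ℝ)/2) * (2 * Real.pi) ^ (-(d:ℝ)/2) *
    Real.exp (-(1/2) * ((x - μ) ⬝ᵥ (C⁻¹ *ᵥ (x - μ))))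

noncomputable def qN {d : ℕ} (y : Fin (d+1) → ℝ) (S : Matrix (Fin (d+1)) (Fin (d+1)) ℝ) : ℝ :=
  (2 * Real.pi * Real.exp 1) ^ ((1:ℝ)/2) * S.det ^ (-(1:ℝ)/2) *
    (2 * Real.pi) ^ (-((d:ℝ)+1)/2) * Real.exp (-(1/2) * (y ⬝ᵥ (S⁻¹ *ᵥ y)))

def liftPt {d : ℕ} (x : Fin d → ℝ) : Fin (d+1) → ℝ := Fin.snoc x 1

noncomputable def Lgauss {d n : ℕ} (x : Fin n → Fin d → ℝ) (μ : Fin d → ℝ)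
    (C : Matrix (Fin d) (Fin d) ℝ) : ℝ := ∑ i, Real.log (pN (x i) μ C)

noncomputable def Lhat {d n : ℕ} (x : Fin n → Fin d → ℝ)
    (S : Matrix (Fin (d+1)) (Fin (d+1)) ℝ) : ℝ := ∑ i, Real.log (qN (liftPt (x i)) S)

def Sblk {d : ℕ} (U : Matrix (Fin d) (Fin d) ℝ) (t : Fin d → ℝ) (s : ℝ) :
    Matrix (Fin (d+1)) (Fin (d+1)) ℝ :=
  Matrix.of (Fin.snoc
    (fun i : Fin d => Fin.snoc (fun j : Fin d => U i j + s * t i * t j) (s * t i))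
    (Fin.snoc (fun j : Fin d => s * t j) s))

open Matrix Real
open scoped Classical

/-- The unique symmetric positive semidefinite square root of a positive semidefinite
matrix (junk value `0` if the matrix is not positive semidefinite). -/
noncomputable def psqrt {m : ℕ} (M : Matrix (Fin m) (Fin m) ℝ) : Matrix (Fin m) (Fin m) ℝ :=
  if h : M.PosSemidef then
    (h.1.eigenvectorUnitary : Matrix (Fin m) (Fin m) ℝ) *
      diagonal ((↑) ∘ Real.sqrt ∘ h.1.eigenvalues) *
      (star h.1.eigenvectorUnitary : Matrix (Fin m) (Fin m) ℝ) else 0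

/-- The geometric mean `S # R = S^{1/2} (S^{-1/2} R S^{-1/2})^{1/2} S^{1/2}` of two
positive definite matrices: the midpoint of the geodesic joining them in the
affine-invariant Riemannian metric. -/
noncomputable def geoMean {m : ℕ} (S R : Matrix (Fin m) (Fin m) ℝ) :
    Matrix (Fin m) (Fin m) ℝ :=
  psqrt S * psqrt ((psqrt S)⁻¹ * R * (psqrt S)⁻¹) * psqrt S

open scoped MatrixOrder

namespace Matrix

variable {n : Type*} [Fintype n]

lemma two_mul_dotProduct_le_add {R : Type*} [CommRing R] [LinearOrder R] [IsStrictOrderedRing R]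
    (u v : n → R) : 2 * (u ⬝ᵥ v) ≤ u ⬝ᵥ u + v ⬝ᵥ v := by
  have h : 0 ≤ (u - v) ⬝ᵥ (u - v) := Finset.sum_nonneg fun i _ => mul_self_nonneg _
  simp only [sub_dotProduct, dotProduct_sub, dotProduct_comm v u] at h
  linarith

lemma dotProduct_transpose_mul_mulVec {R m : Type*} [CommSemiring R] [Fintype m]
    (B C : Matrix m n R) (y : n → R) : y ⬝ᵥ ((Bᵀ * C) *ᵥ y) = (B *ᵥ y) ⬝ᵥ (C *ᵥ y) := by
  rw [← mulVec_mulVec, dotProduct_mulVec, vecMul_transpose]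

lemma dotProduct_inv_mul_mul_mulVec_le {𝕜 : Type*} [Field 𝕜] [LinearOrder 𝕜]
    [IsStrictOrderedRing 𝕜] [DecidableEq n] {T N : Matrix n n 𝕜} (hT : T.IsSymm) (hN : N.IsSymm)
    (y : n → 𝕜) :
    y ⬝ᵥ ((T * N * T)⁻¹ *ᵥ y) ≤
      2⁻¹ * (y ⬝ᵥ ((T * T)⁻¹ *ᵥ y)) + 2⁻¹ * (y ⬝ᵥ ((T * (N * N) * T)⁻¹ *ᵥ y)) := by
  set B := T⁻¹
  set A := N⁻¹
  have hB : Bᵀ = B := by rw [transpose_nonsing_inv, hT.eq]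
  have hA : Aᵀ = A := by rw [transpose_nonsing_inv, hN.eq]
  have hG : (T * N * T)⁻¹ = Bᵀ * (A * B) := by simp only [hB, mul_inv_rev, Matrix.mul_assoc, B, A]
  have hS : (T * T)⁻¹ = Bᵀ * B := by rw [hB, mul_inv_rev]
  have hR : (T * (N * N) * T)⁻¹ = (A * B)ᵀ * (A * B) := by
    simp only [transpose_mul, hA, hB, mul_inv_rev, Matrix.mul_assoc, B, A]
  rw [hG, hS, hR, dotProduct_transpose_mul_mulVec, dotProduct_transpose_mul_mulVec,
    dotProduct_transpose_mul_mulVec, ← mulVec_mulVec]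
  linarith [two_mul_dotProduct_le_add (B *ᵥ y) (A *ᵥ (B *ᵥ y))]

lemma log_det_mul_mul [DecidableEq n] {T N : Matrix n n ℝ}
    (hT : T.det ≠ 0) (hN : N.det ≠ 0) :
    Real.log (T * N * T).det =
      2⁻¹ * Real.log (T * T).det + 2⁻¹ * Real.log (T * (N * N) * T).det := by
  simp only [det_mul]
  rw [Real.log_mul (by positivity) hT, Real.log_mul hT hN, Real.log_mul hT hT,
    Real.log_mul (by positivity) hT, Real.log_mul hT (by positivity), Real.log_mul hN hN]
  ring

lemma PosDef.sqrt [DecidableEq n] {A : Matrix n n ℝ} (hA : A.PosDef) :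
    (CFC.sqrt A).PosDef :=
  hA.isStrictlyPositive.sqrt.posDef

end Matrix

lemma psqrt_eq_cfc_sqrt {m : ℕ} {M : Matrix (Fin m) (Fin m) ℝ} (hM : M.PosSemidef) :
    psqrt M = CFC.sqrt M := by
  rw [CFC.sqrt_eq_real_sqrt M hM.nonneg, cfcₙ_eq_cfc, hM.1.cfc_eq, IsHermitian.cfc,
    Unitary.conjStarAlgAut_apply, psqrt, dif_pos hM]
  rfl

lemma exists_geoMean_eq_mul_mul {m : ℕ} {S R : Matrix (Fin m) (Fin m) ℝ} (hS : S.PosDef)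
    (hR : R.PosDef) :
    ∃ T N : Matrix (Fin m) (Fin m) ℝ, T.PosDef ∧ N.PosDef ∧
      S = T * T ∧ R = T * (N * N) * T ∧ geoMean S R = T * N * T := by
  set T := CFC.sqrt S
  have hT : T.PosDef := hS.sqrt
  have hTinv : T⁻¹ᵀ = T⁻¹ := by
    rw [← conjTranspose_eq_transpose_of_trivial]; exact hT.inv.1
  have hM : (T⁻¹ * R * T⁻¹).PosDef := by
    simpa only [conjTranspose_eq_transpose_of_trivial, hTinv] using
      hR.conjTranspose_mul_mul_same (mulVec_injective_iff_isUnit.mpr hT.inv.isUnit)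
  refine ⟨T, CFC.sqrt (T⁻¹ * R * T⁻¹), hT, hM.sqrt,
    (CFC.sqrt_mul_sqrt_self S hS.posSemidef.nonneg).symm, ?_, ?_⟩
  · rw [CFC.sqrt_mul_sqrt_self _ hM.posSemidef.nonneg]
    have hTdet : IsUnit T.det := hT.det_pos.ne'.isUnit
    simp only [← Matrix.mul_assoc, mul_nonsing_inv _ hTdet, Matrix.one_mul]
    rw [Matrix.mul_assoc, nonsing_inv_mul _ hTdet, Matrix.mul_one]
  · rw [geoMean, psqrt_eq_cfc_sqrt hS.posSemidef, psqrt_eq_cfc_sqrt hM.posSemidef]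

lemma log_qN {d : ℕ} (y : Fin (d+1) → ℝ) {S : Matrix (Fin (d+1)) (Fin (d+1)) ℝ}
    (hS : 0 < S.det) :
    Real.log (qN y S) = 2⁻¹ * Real.log (2 * π * Real.exp 1) - ((d:ℝ)+1) / 2 * Real.log (2 * π)
      - 2⁻¹ * Real.log S.det - 2⁻¹ * (y ⬝ᵥ (S⁻¹ *ᵥ y)) := by
  rw [qN, Real.log_mul (by positivity) (Real.exp_ne_zero _), Real.log_mul (by positivity)
    (by positivity), Real.log_mul (by positivity) (by positivity), Real.log_rpow (by positivity),
    Real.log_rpow hS, Real.log_rpow (by positivity), Real.log_exp]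
  ring

theorem Lhat_geodesically_midpoint_concave_general {d n : ℕ} (x : Fin n → Fin d → ℝ)
    (S R : Matrix (Fin (d+1)) (Fin (d+1)) ℝ) (hS : S.PosDef) (hR : R.PosDef) :
    (1/2) * Lhat x S + (1/2) * Lhat x R ≤ Lhat x (geoMean S R) := by
  obtain ⟨T, N, hT, hN, rfl, rfl, hG⟩ := exists_geoMean_eq_mul_mul hS hR
  have hdet := log_det_mul_mul hT.det_pos.ne' hN.det_pos.ne'
  have hGdet : 0 < (T * N * T).det := by
    simpa only [det_mul] using mul_pos (mul_pos hT.det_pos hN.det_pos) hT.det_pos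
  rw [hG, Lhat, Lhat, Lhat, Finset.mul_sum, Finset.mul_sum, ← Finset.sum_add_distrib]
  refine Finset.sum_le_sum fun i _ => ?_
  rw [log_qN _ hS.det_pos, log_qN _ hR.det_pos, log_qN _ hGdet, hdet]
  have hquad := dotProduct_inv_mul_mul_mulVec_le (isHermitian_iff_isSymm.mp hT.isHermitian)
    (isHermitian_iff_isSymm.mp hN.isHermitian) (liftPt (x i))
  linarith

/-- the reformulated single-Gaussian log-likelihood is geodesically
midpoint-concave on the positive definite matrices. -/
theorem Lhat_geodesically_midpoint_concave {d n : ℕ} (hd : 1 ≤ d) (x : Fin n → Fin d → ℝ)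
    (S R : Matrix (Fin (d+1)) (Fin (d+1)) ℝ) (hS : S.PosDef) (hR : R.PosDef) :
    (1/2) * Lhat x S + (1/2) * Lhat x R ≤ Lhat x (geoMean S R) :=
  Lhat_geodesically_midpoint_concave_general x S R hS hR
end

section
/- Let T ≥ 1 be an integer, L > 0, G > 0, f* ∈ ℝ. Let F₁,…,F_{T+1} ∈ ℝ with F_{T+1} ≥ f* and F₁ > f*, and let N₁,…,N_T ≥ 0 be nonnegative reals. Set c = √(2(F₁ − f*)/L) / G and η = c/√T, and assume F_{t+1} ≤ F_t − η N_t + (L/2) η² G² for each t ∈ {1,…,T}. Then min_{1 ≤ t ≤ T} N_t ≤ G √(2 L (F₁ − f*)) / √T; in particular min_{1 ≤ t ≤ T} N_t = O(1/√T). -/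
/-!
Summing the descent inequalities telescopes to `η ∑ₜ Nₜ ≤ (F₁ - f*) + T (L/2) η² G²`, and the
minimum is at most the average, so with `η = c / √T` one gets
`min Nₜ ≤ ((F₁ - f*) / c + L c G² / 2) / √T`. The given `c` minimizes the numerator, whose
two terms then both equal `G √(L (F₁ - f*) / 2)`.
-/

open Finset

theorem Fin.sum_univ_castSucc_sub_succ {M : Type*} [AddCommGroup M] {n : ℕ}
    (F : Fin (n + 1) → M) :
    ∑ t : Fin n, (F t.castSucc - F t.succ) = F 0 - F (Fin.last n) := by
  rw [sum_sub_distrib, sub_eq_sub_iff_add_eq_add, ← Fin.sum_univ_castSucc, Fin.sum_univ_succ]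

theorem Finset.card_nsmul_inf'_le_sum {ι M : Type*} [AddCommMonoid M] [LinearOrder M]
    [IsOrderedAddMonoid M] (s : Finset ι) (hs : s.Nonempty) (f : ι → M) :
    #s • s.inf' hs f ≤ ∑ i ∈ s, f i :=
  card_nsmul_le_sum s f _ fun _ hi => inf'_le f hi

section Descent

variable {n : ℕ} {F : Fin (n + 1) → ℝ} {N : Fin n → ℝ} {fstar : ℝ}

theorem mul_sum_le_of_descent {η δ : ℝ} (hlast : fstar ≤ F (Fin.last n))
    (hstep : ∀ t, F t.succ ≤ F t.castSucc - η * N t + δ) :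
    η * ∑ t, N t ≤ F 0 - fstar + n * δ :=
  calc η * ∑ t, N t = ∑ t, η * N t := mul_sum _ _ _
    _ ≤ ∑ t, (F t.castSucc - F t.succ + δ) := sum_le_sum fun t _ => by linarith [hstep t]
    _ = F 0 - F (Fin.last n) + n * δ := by
      rw [sum_add_distrib, Fin.sum_univ_castSucc_sub_succ, sum_const, card_univ,
        Fintype.card_fin, nsmul_eq_mul]
    _ ≤ F 0 - fstar + n * δ := by linarith

theorem inf'_le_of_descent {L G c : ℝ} (hne : (univ : Finset (Fin n)).Nonempty) (hc : 0 < c)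
    (hlast : fstar ≤ F (Fin.last n))
    (hstep : ∀ t, F t.succ ≤ F t.castSucc - c / √n * N t + L / 2 * (c / √n) ^ 2 * G ^ 2) :
    univ.inf' hne N ≤ ((F 0 - fstar) / c + L * c * G ^ 2 / 2) / √n := by
  have hn : (0 : ℝ) < n := by simpa using hne.card_pos
  have hsqrt : 0 < √(n : ℝ) := Real.sqrt_pos.mpr hn
  have hmin : n * univ.inf' hne N ≤ ∑ t, N t := by
    simpa using card_nsmul_inf'_le_sum univ hne N
  have hsum := mul_sum_le_of_descent hlast hstep
  have hmain : c * √n * univ.inf' hne N ≤ F 0 - fstar + L * c ^ 2 * G ^ 2 / 2 := by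
    calc c * √n * univ.inf' hne N = c / √n * (n * univ.inf' hne N) := by
          field_simp; rw [Real.sq_sqrt hn.le]; ring
      _ ≤ c / √n * ∑ t, N t := by gcongr
      _ ≤ F 0 - fstar + n * (L / 2 * (c / √n) ^ 2 * G ^ 2) := hsum
      _ = F 0 - fstar + L * c ^ 2 * G ^ 2 / 2 := by
        field_simp; rw [Real.sq_sqrt hn.le]; ring
  rw [le_div_iff₀ hsqrt, ← mul_le_mul_iff_of_pos_left hc]
  calc c * (univ.inf' hne N * √n) = c * √n * univ.inf' hne N := by ring
    _ ≤ F 0 - fstar + L * c ^ 2 * G ^ 2 / 2 := hmain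
    _ = c * ((F 0 - fstar) / c + L * c * G ^ 2 / 2) := by field_simp

end Descent

theorem div_add_mul_eq_of_optimal_constant {Δ L G : ℝ} (hΔ : 0 ≤ Δ) (hL : 0 < L) (hG : 0 < G) :
    Δ / (√(2 * Δ / L) / G) + L * (√(2 * Δ / L) / G) * G ^ 2 / 2 = G * √(2 * L * Δ) := by
  set s := √(2 * Δ / L)
  have hs2 : s ^ 2 = 2 * Δ / L := Real.sq_sqrt (by positivity)
  have hΔs : Δ = L * s ^ 2 / 2 := by rw [hs2]; field_simp
  have hroot : √(2 * L * Δ) = L * s := by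
    rw [hΔs, show 2 * L * (L * s ^ 2 / 2) = (L * s) ^ 2 by ring,
      Real.sqrt_sq (by positivity)]
  rw [hroot, hΔs]
  rcases eq_or_ne s 0 with hs0 | hs0
  · simp [hs0]
  · field_simp; ring

-- `F 0` is `F₁`, `F (Fin.last T)` is `F_{T+1}`, and `N t` is `N_{t+1}`.
theorem sgd_bounded_gradient_min_rate_general (T : ℕ) (hT : 1 ≤ T)
    (L G fstar : ℝ) (hL : 0 < L) (hG : 0 < G)
    (F : Fin (T+1) → ℝ) (hlast : fstar ≤ F (Fin.last T)) (hF1 : fstar < F 0)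
    (N : Fin T → ℝ)
    (c : ℝ) (hc : c = Real.sqrt (2 * (F 0 - fstar) / L) / G)
    (η : ℝ) (hη : η = c / Real.sqrt T)
    (hstep : ∀ t : Fin T, F t.succ ≤ F t.castSucc - η * N t + L/2 * η^2 * G^2) :
    Finset.univ.inf' (Finset.univ_nonempty_iff.mpr ⟨⟨0, hT⟩⟩) N
      ≤ G * Real.sqrt (2 * L * (F 0 - fstar)) / Real.sqrt T := by
  have hΔ : 0 < F 0 - fstar := sub_pos.mpr hF1
  have hc_pos : 0 < c := by rw [hc]; positivity
  subst hη
  calc _ ≤ ((F 0 - fstar) / c + L * c * G ^ 2 / 2) / √T := inf'_le_of_descent _ hc_pos hlast hstep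
    _ = G * √(2 * L * (F 0 - fstar)) / √T := by
      rw [hc, div_add_mul_eq_of_optimal_constant hΔ.le hL hG]

/-- analytic core of the O(1/√T) corollary for Riemannian SGD with
G-bounded gradient, with the optimized constant `c = √(2(F₁ - f*)/L)/G`.
Here `F 0 = F₁` and `F (Fin.last T) = F_{T+1}`. -/
theorem sgd_bounded_gradient_min_rate (T : ℕ) (hT : 1 ≤ T)
    (L G fstar : ℝ) (hL : 0 < L) (hG : 0 < G)
    (F : Fin (T+1) → ℝ) (hlast : fstar ≤ F (Fin.last T)) (hF1 : fstar < F 0)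
    (N : Fin T → ℝ) (hN : ∀ t, 0 ≤ N t)
    (c : ℝ) (hc : c = Real.sqrt (2 * (F 0 - fstar) / L) / G)
    (η : ℝ) (hη : η = c / Real.sqrt T)
    (hstep : ∀ t : Fin T, F t.succ ≤ F t.castSucc - η * N t + L/2 * η^2 * G^2) :
    Finset.univ.inf' (Finset.univ_nonempty_iff.mpr ⟨⟨0, hT⟩⟩) N
      ≤ G * Real.sqrt (2 * L * (F 0 - fstar)) / Real.sqrt T :=
  sgd_bounded_gradient_min_rate_general T hT L G fstar hL hG F hlast hF1 N c hc η hη hstep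
end

section
/- Let U ∈ ℝ^{d×d} be symmetric positive definite and t ∈ ℝ^d, and let S = S(U,t,1) = [[U + t tᵀ, t], [tᵀ, 1]]. Then for every x ∈ ℝ^d, q_N((x, 1); S) = p_N(x; t, U); that is, when the bottom-right block equals 1, the reformulated density q_N evaluated at the lifted point coincides exactly with the d-dimensional Gaussian density with mean t and covariance U. -/
open Matrix Real

/-!
`S(U, t, s)` factors as `L · diag(U, s) · Lᵀ` with `L = [[1, t], [0, 1]]` unit triangular, so
`det S = s · det U`. The vector `w = (U⁻¹(x - t), s⁻¹ - tᵀU⁻¹(x - t))` solves `S w = (x, 1)`, hence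
`(x, 1)ᵀ S⁻¹ (x, 1) = (x - t)ᵀ U⁻¹ (x - t) + s⁻¹`. For `s = 1` the factor `e^{1/2}` in `q_N` cancels
the extra `+ 1` in the exponent, and its `√(2π)` the extra dimension.
-/

lemma snoc_dotProduct_snoc {R : Type*} [Mul R] [AddCommMonoid R] {d : ℕ} (x y : Fin d → R)
    (a b : R) :
    (Fin.snoc x a : Fin (d + 1) → R) ⬝ᵥ Fin.snoc y b = x ⬝ᵥ y + a * b := by
  simp [dotProduct, Fin.sum_univ_castSucc]

section Sblk

variable {d : ℕ} (U : Matrix (Fin d) (Fin d) ℝ) (t : Fin d → ℝ) (s : ℝ)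

lemma Sblk_mulVec_snoc (v : Fin d → ℝ) (c : ℝ) :
    Sblk U t s *ᵥ Fin.snoc v c =
      Fin.snoc (U *ᵥ v + (s * (t ⬝ᵥ v + c)) • t) (s * (t ⬝ᵥ v + c)) := by
  ext i
  refine Fin.lastCases ?_ (fun i => ?_) i
  all_goals simp only [Sblk, mulVec, dotProduct, Fin.sum_univ_castSucc, of_apply,
    Fin.snoc_castSucc, Fin.snoc_last, Pi.add_apply, Pi.smul_apply, smul_eq_mul, add_mul,
    Finset.sum_add_distrib, mul_add, Finset.mul_sum, Finset.sum_mul]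
  · simp_rw [mul_assoc]
  · ring_nf

def shearBlock : Matrix (Fin d ⊕ Fin 1) (Fin d ⊕ Fin 1) ℝ :=
  fromBlocks 1 (replicateCol (Fin 1) t) 0 1

lemma Sblk_eq_reindex_shearBlock_mul :
    Sblk U t s = reindex finSumFinEquiv finSumFinEquiv
      (shearBlock t * fromBlocks U 0 0 (s • 1) * (shearBlock t)ᵀ) := by
  ext i j
  refine Fin.lastCases ?_ (fun i => ?_) i <;> refine Fin.lastCases ?_ (fun j => ?_) j <;>
    simp [Sblk, shearBlock, fromBlocks_multiply, fromBlocks_transpose, mul_apply, mul_assoc]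

lemma det_Sblk : (Sblk U t s).det = s * U.det := by
  rw [Sblk_eq_reindex_shearBlock_mul, det_reindex_self, det_mul, det_mul, det_transpose]
  simp [shearBlock, det_fromBlocks_zero₂₁, mul_comm]

lemma liftPt_dotProduct_inv_Sblk_mulVec (hU : IsUnit U.det) (hs : s ≠ 0) (x : Fin d → ℝ) :
    liftPt x ⬝ᵥ ((Sblk U t s)⁻¹ *ᵥ liftPt x) = (x - t) ⬝ᵥ (U⁻¹ *ᵥ (x - t)) + s⁻¹ := by
  set v := U⁻¹ *ᵥ (x - t)
  have hsolve : Sblk U t s *ᵥ Fin.snoc v (s⁻¹ - t ⬝ᵥ v) = liftPt x := by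
    rw [Sblk_mulVec_snoc, add_sub_cancel, mul_inv_cancel₀ hs, one_smul, mulVec_mulVec,
      mul_nonsing_inv _ hU, one_mulVec, sub_add_cancel, liftPt]
  have hdet : IsUnit (Sblk U t s).det := by
    rw [det_Sblk]
    exact (isUnit_iff_ne_zero.2 hs).mul hU
  rw [← hsolve, mulVec_mulVec, nonsing_inv_mul _ hdet, one_mulVec, hsolve, liftPt,
    snoc_dotProduct_snoc, sub_dotProduct]
  ring

end Sblk

lemma qN_eq_of_dotProduct_inv_mulVec_eq_add_one {d : ℕ} (y : Fin (d + 1) → ℝ)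
    (S : Matrix (Fin (d + 1)) (Fin (d + 1)) ℝ) (Q : ℝ) (hQ : y ⬝ᵥ (S⁻¹ *ᵥ y) = Q + 1) :
    qN y S = S.det ^ (-(1:ℝ)/2) * (2 * π) ^ (-(d:ℝ)/2) * exp (-(1/2) * Q) := by
  have h2pi : (0:ℝ) < 2 * π := by positivity
  have hsplit : (2 * π * exp 1) ^ ((1:ℝ)/2) = (2 * π) ^ ((1:ℝ)/2) * exp (1/2) := by
    rw [mul_rpow h2pi.le (exp_pos 1).le, exp_one_rpow]
  have hpow : (2 * π) ^ ((1:ℝ)/2) * (2 * π) ^ (-((d:ℝ)+1)/2) = (2 * π) ^ (-(d:ℝ)/2) := by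
    rw [← rpow_add h2pi]
    ring_nf
  have hexp : exp (1/2) * exp (-(1/2) * (Q + 1)) = exp (-(1/2) * Q) := by
    rw [← exp_add]
    ring_nf
  rw [qN, hQ, hsplit, ← hpow, ← hexp]
  ring

/-- when the bottom-right block is 1, the reformulated density `q_N` at the
lifted point coincides with the d-dimensional Gaussian density with mean `t` and
covariance `U`. -/
theorem qN_at_s_eq_one {d : ℕ} (U : Matrix (Fin d) (Fin d) ℝ) (hU : U.PosDef)
    (t : Fin d → ℝ) (x : Fin d → ℝ) :
    qN (liftPt x) (Sblk U t 1) = pN x t U := by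
  have hquad := liftPt_dotProduct_inv_Sblk_mulVec U t 1 hU.det_pos.ne'.isUnit one_ne_zero x
  rw [inv_one] at hquad
  rw [qN_eq_of_dotProduct_inv_mulVec_eq_add_one _ _ _ hquad, det_Sblk, one_mul, pN]
end
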